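/- Let S be a monoid and Q a right S-act. Then Q is InC-injective if and only if Q^θ is injective, where Q^θ denotes Q itself if Q contains a zero element, and Q with one externally adjoined zero element θ (with θ·s = θ for all s ∈ S) otherwise. -/

import Mathlib

universe u

/-- A right `S`-act structure on a nonempty type `A`: a right action of the monoid `S`. -/
class RightAct (S : Type u) [Monoid S] (A : Type u) : Type u where
  act : A → S → A
  act_one : ∀ a : A, act a 1 = a
  act_mul : ∀ (a : A) (s t : S), act (act a s) t = act a (s * t)
  nonempty : Nonempty A

infixl:70 " ⊛ " => RightAct.act

/-- `S` is left reversible: every two right ideals (equiv. principal ones) intersect. -/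
def LeftReversible (S : Type u) [Monoid S] : Prop :=
  ∀ a b : S, ∃ u v : S, a * u = b * v

/-- A left zero element of the monoid `S`. -/
def IsLeftZero (S : Type u) [Monoid S] (z : S) : Prop :=
  ∀ s : S, z * s = z

/-- `f : A → B` is a homomorphism of right `S`-acts. -/
def IsActHom (S : Type u) [Monoid S] {A B : Type u} [RightAct S A] [RightAct S B]
    (f : A → B) : Prop :=
  ∀ (a : A) (s : S), f (a ⊛ s) = f a ⊛ s

/-- The restriction of `f : A → B` to the subset `C` is a homomorphism of right `S`-acts. -/
def IsActHomOn (S : Type u) [Monoid S] {A B : Type u} [RightAct S A] [RightAct S B]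
    (f : A → B) (C : Set A) : Prop :=
  ∀ a ∈ C, ∀ s : S, f (a ⊛ s) = f a ⊛ s

/-- A subact: a nonempty subset closed under the action. -/
def IsSubact (S : Type u) [Monoid S] {A : Type u} [RightAct S A] (C : Set A) : Prop :=
  C.Nonempty ∧ ∀ a ∈ C, ∀ s : S, a ⊛ s ∈ C

/-- A zero element of an act: fixed by the action of every `s ∈ S`. -/
def IsZeroElem (S : Type u) [Monoid S] {A : Type u} [RightAct S A] (θ : A) : Prop :=
  ∀ s : S, θ ⊛ s = θ

/-- A subset `D` (viewed as an act) is decomposable: it is the disjoint union of two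
nonempty subacts. -/
def DecomposableSet (S : Type u) [Monoid S] {A : Type u} [RightAct S A] (D : Set A) : Prop :=
  ∃ B C : Set A, IsSubact S B ∧ IsSubact S C ∧ B ∪ C = D ∧ B ∩ C = ∅

/-- A subset (viewed as an act) is indecomposable. -/
def IndecomposableSet (S : Type u) [Monoid S] {A : Type u} [RightAct S A] (D : Set A) : Prop :=
  ¬ DecomposableSet S D

/-- The act `A` is decomposable. -/
def Decomposable (S : Type u) [Monoid S] (A : Type u) [RightAct S A] : Prop :=
  DecomposableSet S (Set.univ : Set A)

/-- The act `A` is indecomposable. -/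
def Indecomposable (S : Type u) [Monoid S] (A : Type u) [RightAct S A] : Prop :=
  ¬ Decomposable S A

/-- A cyclic act: generated by a single element. -/
def CyclicAct (S : Type u) [Monoid S] (A : Type u) [RightAct S A] : Prop :=
  ∃ a : A, ∀ x : A, ∃ s : S, x = a ⊛ s

/-- `A` is a retract of `B`. -/
def IsRetractOf (S : Type u) [Monoid S] (A B : Type u) [RightAct S A] [RightAct S B] : Prop :=
  ∃ (i : A → B) (p : B → A), IsActHom S i ∧ IsActHom S p ∧ ∀ a : A, p (i a) = a

/-- `Q` is an injective act: every homomorphism from a subact `C` of any act `B` into `Q`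
extends to `B`. -/
def ActInjective (S : Type u) [Monoid S] (Q : Type u) [RightAct S Q] : Prop :=
  ∀ (B : Type u) [RightAct S B], ∀ C : Set B, IsSubact S C →
    ∀ f : B → Q, IsActHomOn S f C →
      ∃ g : B → Q, IsActHom S g ∧ Set.EqOn g f C

/-- `Q` is InC-injective: injective relative to all embeddings into indecomposable acts. -/
def InCInjective (S : Type u) [Monoid S] (Q : Type u) [RightAct S Q] : Prop :=
  ∀ (B : Type u) [RightAct S B], Indecomposable S B → ∀ C : Set B, IsSubact S C →
    ∀ f : B → Q, IsActHomOn S f C →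
      ∃ g : B → Q, IsActHom S g ∧ Set.EqOn g f C

/-- `Q` is InD-injective: injective relative to all embeddings of indecomposable acts. -/
def InDInjective (S : Type u) [Monoid S] (Q : Type u) [RightAct S Q] : Prop :=
  ∀ (B : Type u) [RightAct S B], ∀ C : Set B, IsSubact S C → IndecomposableSet S C →
    ∀ f : B → Q, IsActHomOn S f C →
      ∃ g : B → Q, IsActHom S g ∧ Set.EqOn g f C

/-- `Q` is PInD-injective: every monomorphism from an indecomposable subact extends. -/
def PInDInjective (S : Type u) [Monoid S] (Q : Type u) [RightAct S Q] : Prop :=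
  ∀ (B : Type u) [RightAct S B], ∀ C : Set B, IsSubact S C → IndecomposableSet S C →
    ∀ f : B → Q, IsActHomOn S f C → Set.InjOn f C →
      ∃ g : B → Q, IsActHom S g ∧ Set.EqOn g f C

/-- `A` is quasi injective: homomorphisms from subacts of `A` to `A` extend to `A`. -/
def QuasiInjective (S : Type u) [Monoid S] (A : Type u) [RightAct S A] : Prop :=
  ∀ C : Set A, IsSubact S C → ∀ f : A → A, IsActHomOn S f C →
    ∃ g : A → A, IsActHom S g ∧ Set.EqOn g f C

/-- `A` is pseudo injective: monomorphisms from subacts of any act into `A` extend. -/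
def PseudoInjective (S : Type u) [Monoid S] (A : Type u) [RightAct S A] : Prop :=
  ∀ (C : Type u) [RightAct S C], ∀ B : Set C, IsSubact S B →
    ∀ f : C → A, IsActHomOn S f B → Set.InjOn f B →
      ∃ g : C → A, IsActHom S g ∧ Set.EqOn g f B

/-- A subact `Q` of `A` (viewed as an act in its own right) is injective. -/
def ActInjectiveSet (S : Type u) [Monoid S] {A : Type u} [RightAct S A] (Q : Set A) : Prop :=
  ∀ (B : Type u) [RightAct S B], ∀ C : Set B, IsSubact S C →
    ∀ f : B → A, IsActHomOn S f C → (∀ c ∈ C, f c ∈ Q) →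
      ∃ g : B → A, IsActHom S g ∧ (∀ b : B, g b ∈ Q) ∧ Set.EqOn g f C

/-- A subact `Q` of `A` (viewed as an act in its own right) is InD-injective. -/
def InDInjectiveSet (S : Type u) [Monoid S] {A : Type u} [RightAct S A] (Q : Set A) : Prop :=
  ∀ (B : Type u) [RightAct S B], ∀ C : Set B, IsSubact S C → IndecomposableSet S C →
    ∀ f : B → A, IsActHomOn S f C → (∀ c ∈ C, f c ∈ Q) →
      ∃ g : B → A, IsActHom S g ∧ (∀ b : B, g b ∈ Q) ∧ Set.EqOn g f C

/-- A subact `Q` of `A` (viewed as an act in its own right) is PInD-injective. -/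
def PInDInjectiveSet (S : Type u) [Monoid S] {A : Type u} [RightAct S A] (Q : Set A) : Prop :=
  ∀ (B : Type u) [RightAct S B], ∀ C : Set B, IsSubact S C → IndecomposableSet S C →
    ∀ f : B → A, IsActHomOn S f C → Set.InjOn f C → (∀ c ∈ C, f c ∈ Q) →
      ∃ g : B → A, IsActHom S g ∧ (∀ b : B, g b ∈ Q) ∧ Set.EqOn g f C

/-- The monoid `S` as a right act over itself, by multiplication. -/
instance selfAct (S : Type u) [Monoid S] : RightAct S S where
  act a s := a * s
  act_one := mul_one
  act_mul a s t := mul_assoc a s t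
  nonempty := ⟨1⟩

/-- `Q` is weakly injective: homomorphisms from right ideals of `S` into `Q` extend to `S`. -/
def WeaklyInjective (S : Type u) [Monoid S] (Q : Type u) [RightAct S Q] : Prop :=
  ∀ I : Set S, IsSubact S I → ∀ f : S → Q, IsActHomOn S f I →
    ∃ g : S → Q, IsActHom S g ∧ Set.EqOn g f I

/-- The relation whose equivalence closure has the indecomposable components as classes. -/
def ActRel (S : Type u) [Monoid S] {A : Type u} [RightAct S A] (a b : A) : Prop :=
  ∃ s : S, b = a ⊛ s

/-- The indecomposable component of the element `a` of an act. -/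
def ActComponent (S : Type u) [Monoid S] {A : Type u} [RightAct S A] (a : A) : Set A :=
  {b | Relation.EqvGen (ActRel S) a b}

/-- The act `A` with an externally adjoined zero (`none`). -/
instance optionAct (S : Type u) [Monoid S] (A : Type u) [RightAct S A] :
    RightAct S (Option A) where
  act o s := o.map (· ⊛ s)
  act_one o := by cases o <;> simp [RightAct.act_one]
  act_mul o s t := by cases o <;> simp [RightAct.act_mul]
  nonempty := ⟨none⟩


open scoped Classical

/-! Injectivity of an act `T` with a zero reduces, by Zorn's lemma applied to graphs of partial
homomorphisms, to extending homomorphisms defined on a subact of a cyclic act `bS`; the zero of `T`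
handles orbits that miss the domain. Cyclic acts are indecomposable, so for acts with a zero
InC-injectivity already implies injectivity.

When `Q` has no zero, `Q` and `Option Q` are InC-injective together. A homomorphism from an
indecomposable act into `Option Q` that meets `Q` never takes the value `none`. Conversely, let
`f : C → Option Q` be a homomorphism on a subact `C` of an indecomposable act `B`. If `f` misses
`Q` it extends by `none`, and if it misses `none` it extends through `Q`. If it took both kinds of
values, collapsing its `none`-locus `N` to a point would give an indecomposable Rees
quotient `B / N` on which `f` induces a `Q`-valued homomorphism; any extension of it sends the
collapsed point to a zero of `Q`. -/

section Closed

variable {S : Type u} [Monoid S] {A B : Type u} [RightAct S A] [RightAct S B]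

def IsActClosed (S : Type u) [Monoid S] {A : Type u} [RightAct S A] (D : Set A) : Prop :=
  ∀ a ∈ D, ∀ s : S, a ⊛ s ∈ D

theorem IsActClosed.inter {D E : Set A} (hD : IsActClosed S D) (hE : IsActClosed S E) :
    IsActClosed S (D ∩ E) :=
  fun a ha s => ⟨hD a ha.1 s, hE a ha.2 s⟩

theorem IsActClosed.union {D E : Set A} (hD : IsActClosed S D) (hE : IsActClosed S E) :
    IsActClosed S (D ∪ E) := by
  rintro a (ha | ha) s
  exacts [Or.inl (hD a ha s), Or.inr (hE a ha s)]

theorem IsActClosed.image {D : Set A} (hD : IsActClosed S D) {π : A → B} (hπ : IsActHom S π) :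
    IsActClosed S (π '' D) := by
  rintro _ ⟨a, ha, rfl⟩ s
  exact ⟨a ⊛ s, hD a ha s, hπ a s⟩

theorem IsActHomOn.mono {f : A → B} {C D : Set A} (hf : IsActHomOn S f C) (hDC : D ⊆ C) :
    IsActHomOn S f D :=
  fun a ha => hf a (hDC ha)

theorem isActHomOn_univ {f : A → B} : IsActHomOn S f Set.univ ↔ IsActHom S f :=
  ⟨fun hf a => hf a (Set.mem_univ a), fun hf a _ => hf a⟩

theorem IsActHomOn.piecewise {E D : Set A} {g h : A → B} (hE : IsActClosed S E)
    (hD : IsActClosed S D) (hg : IsActHomOn S g E) (hh : IsActHomOn S h D)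
    (hhg : Set.EqOn h g (E ∩ D)) : IsActHomOn S (D.piecewise h g) (E ∪ D) := by
  intro a ha s
  by_cases haD : a ∈ D
  · rw [Set.piecewise_eq_of_mem _ _ _ haD, Set.piecewise_eq_of_mem _ _ _ (hD a haD s)]
    exact hh a haD s
  have haE : a ∈ E := ha.resolve_right haD
  rw [Set.piecewise_eq_of_notMem _ _ _ haD, ← hg a haE s]
  by_cases hasD : a ⊛ s ∈ D
  · rw [Set.piecewise_eq_of_mem _ _ _ hasD, hhg ⟨hE a haE s, hasD⟩]
  · rw [Set.piecewise_eq_of_notMem _ _ _ hasD]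

end Closed

section Orbit

variable {S : Type u} [Monoid S] {A B : Type u} [RightAct S A] [RightAct S B]

def actOrbit (S : Type u) [Monoid S] {B : Type u} [RightAct S B] (b : B) : Set B :=
  Set.range fun s : S => b ⊛ s

theorem mem_actOrbit_self (b : B) : b ∈ actOrbit S b :=
  ⟨1, RightAct.act_one b⟩

theorem isActClosed_actOrbit (b : B) : IsActClosed S (actOrbit S b) := by
  rintro _ ⟨t, rfl⟩ s
  exact ⟨t * s, (RightAct.act_mul b t s).symm⟩

instance (b : B) : RightAct S (actOrbit S b) where
  act x s := ⟨x.1 ⊛ s, isActClosed_actOrbit b x.1 x.2 s⟩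
  act_one x := Subtype.ext (RightAct.act_one x.1)
  act_mul x s t := Subtype.ext (RightAct.act_mul x.1 s t)
  nonempty := ⟨⟨b, mem_actOrbit_self b⟩⟩

theorem cyclicAct_actOrbit (b : B) : CyclicAct S (actOrbit S b) :=
  ⟨⟨b, mem_actOrbit_self b⟩, fun ⟨_, s, hs⟩ => ⟨s, Subtype.ext hs.symm⟩⟩

theorem CyclicAct.indecomposable (h : CyclicAct S A) : Indecomposable S A := by
  obtain ⟨a, ha⟩ := h
  have key : ∀ {X Y : Set A}, IsSubact S X → a ∈ X → X ∩ Y = ∅ → Y = ∅ := by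
    intro X Y hX haX hXY
    refine Set.eq_empty_of_forall_notMem fun y hy => ?_
    obtain ⟨s, rfl⟩ := ha y
    exact hXY.subset ⟨hX.2 a haX s, hy⟩
  rintro ⟨X, Y, hX, hY, hXY, hXY0⟩
  rcases hXY.symm.subset (Set.mem_univ a) with haX | haY
  · exact hY.1.ne_empty (key hX haX hXY0)
  · exact hX.1.ne_empty (key hY haY (Set.inter_comm X Y ▸ hXY0))

theorem Indecomposable.of_surjective (hA : Indecomposable S A) {π : A → B} (hπ : IsActHom S π)
    (hπs : Function.Surjective π) : Indecomposable S B := by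
  rintro ⟨X, Y, hX, hY, hXY, hXY0⟩
  have pull : ∀ {Z : Set B}, IsSubact S Z → IsSubact S (π ⁻¹' Z) := fun hZ =>
    ⟨hZ.1.preimage hπs, fun a ha s => by simpa only [Set.mem_preimage, hπ a s] using hZ.2 _ ha s⟩
  refine hA ⟨π ⁻¹' X, π ⁻¹' Y, pull hX, pull hY, ?_, ?_⟩
  · rw [← Set.preimage_union, hXY, Set.preimage_univ]
  · rw [← Set.preimage_inter, hXY0, Set.preimage_empty]

end Orbit

section Zorn

variable {S : Type u} [Monoid S] {B T : Type u} [RightAct S B] [RightAct S T]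

/-- The graph of a homomorphism defined on a closed subset of `B`. -/
def IsActHomGraph (S : Type u) [Monoid S] {B T : Type u} [RightAct S B] [RightAct S T]
    (R : Set (B × T)) : Prop :=
  (∀ x t t', (x, t) ∈ R → (x, t') ∈ R → t = t') ∧ ∀ p ∈ R, ∀ s : S, (p.1 ⊛ s, p.2 ⊛ s) ∈ R

theorem isActHomGraph_image {E : Set B} (hE : IsActClosed S E) {g : B → T}
    (hg : IsActHomOn S g E) : IsActHomGraph S ((fun x => (x, g x)) '' E) := by
  refine ⟨?_, ?_⟩
  · rintro x t t' ⟨y, -, hy⟩ ⟨y', -, hy'⟩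
    simp only [Prod.mk.injEq] at hy hy'
    rw [← hy.2, ← hy'.2, hy.1, hy'.1]
  · rintro _ ⟨x, hx, rfl⟩ s
    exact ⟨x ⊛ s, hE x hx s, Prod.ext rfl (hg x hx s)⟩

theorem isActHomGraph_sUnion {c : Set (Set (B × T))} (hc : IsChain (· ⊆ ·) c)
    (h : ∀ R ∈ c, IsActHomGraph S R) : IsActHomGraph S (⋃₀ c) := by
  refine ⟨?_, ?_⟩
  · rintro x t t' ⟨R, hR, hxt⟩ ⟨R', hR', hxt'⟩
    rcases hc.total hR hR' with hRR' | hR'R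
    exacts [(h R' hR').1 x t t' (hRR' hxt) hxt', (h R hR).1 x t t' hxt (hR'R hxt')]
  · rintro p ⟨R, hR, hp⟩ s
    exact ⟨R, hR, (h R hR).2 p hp s⟩

theorem IsActHomGraph.isActClosed_fst_image {R : Set (B × T)} (hR : IsActHomGraph S R) :
    IsActClosed S (Prod.fst '' R) := by
  rintro _ ⟨p, hp, rfl⟩ s
  exact ⟨_, hR.2 p hp s, rfl⟩

theorem IsActHomGraph.exists_isActHomOn {R : Set (B × T)} (hR : IsActHomGraph S R) :
    ∃ g : B → T, (∀ p ∈ R, g p.1 = p.2) ∧ IsActHomOn S g (Prod.fst '' R) := by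
  have : Nonempty T := RightAct.nonempty (S := S)
  let g : B → T := fun x => Classical.epsilon fun t => (x, t) ∈ R
  have hgR : ∀ p ∈ R, g p.1 = p.2 := fun p hp =>
    hR.1 p.1 _ p.2 (Classical.epsilon_spec (p := fun t => (p.1, t) ∈ R) ⟨p.2, hp⟩) hp
  refine ⟨g, hgR, ?_⟩
  rintro _ ⟨p, hp, rfl⟩ s
  rw [hgR p hp]
  exact hgR _ (hR.2 p hp s)

theorem actInjective_of_extend_to_orbit
    (H : ∀ (B : Type u) [RightAct S B] (E : Set B), IsActClosed S E → ∀ (b : B) (g : B → T),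
      IsActHomOn S g E → ∃ g' : B → T, IsActHomOn S g' (E ∪ actOrbit S b) ∧ Set.EqOn g' g E) :
    ActInjective S T := by
  intro B _ C hC f hf
  obtain ⟨M, hfM, hM⟩ := zorn_subset_nonempty {R : Set (B × T) | IsActHomGraph S R}
    (fun c hcG hc _ => ⟨⋃₀ c, isActHomGraph_sUnion hc hcG, fun _ => Set.subset_sUnion_of_mem⟩)
    _ (isActHomGraph_image hC.2 hf)
  obtain ⟨g, hgM, hg⟩ := hM.prop.exists_isActHomOn
  have hgf : Set.EqOn g f C := fun c hc => hgM _ (hfM ⟨c, hc, rfl⟩)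
  suffices hE : Prod.fst '' M = Set.univ from ⟨g, isActHomOn_univ.1 (hE ▸ hg), hgf⟩
  by_contra hne
  obtain ⟨b, hb⟩ := (Set.ne_univ_iff_exists_notMem _).1 hne
  have hE := hM.prop.isActClosed_fst_image
  obtain ⟨g', hg', hg'g⟩ := H B _ hE b g hg
  have hM' := isActHomGraph_image (hE.union (isActClosed_actOrbit b)) hg'
  have hMM' : M ⊆ (fun x => (x, g' x)) '' (Prod.fst '' M ∪ actOrbit S b) := fun p hp =>
    ⟨p.1, Or.inl ⟨p, hp, rfl⟩, Prod.ext rfl ((hg'g ⟨p, hp, rfl⟩).trans (hgM p hp))⟩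
  exact hb ⟨_, hM.2 hM' hMM' ⟨b, Or.inr (mem_actOrbit_self b), rfl⟩, rfl⟩

theorem actInjective_of_extend_on_orbit (θ : T) (hθ : IsZeroElem S θ)
    (H : ∀ (B : Type u) [RightAct S B] (b : B) (C : Set B), C ⊆ actOrbit S b → IsSubact S C →
      ∀ g : B → T, IsActHomOn S g C →
        ∃ h : B → T, IsActHomOn S h (actOrbit S b) ∧ Set.EqOn h g C) :
    ActInjective S T := by
  refine actInjective_of_extend_to_orbit fun B _ E hE b g hg => ?_
  have hO := isActClosed_actOrbit (S := S) b
  obtain ⟨h, hh, hhg⟩ : ∃ h : B → T, IsActHomOn S h (actOrbit S b) ∧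
      Set.EqOn h g (E ∩ actOrbit S b) := by
    rcases (E ∩ actOrbit S b).eq_empty_or_nonempty with hempty | hne
    · exact ⟨fun _ => θ, fun _ _ s => (hθ s).symm, by simp [hempty]⟩
    · exact H B b _ Set.inter_subset_right ⟨hne, hE.inter hO⟩ g (hg.mono Set.inter_subset_left)
  refine ⟨_, hg.piecewise hE hO hh hhg, fun x hx => ?_⟩
  by_cases hxO : x ∈ actOrbit S b
  · rw [Set.piecewise_eq_of_mem _ _ _ hxO, hhg ⟨hx, hxO⟩]
  · rw [Set.piecewise_eq_of_notMem _ _ _ hxO]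

end Zorn

section InCInjective

variable {S : Type u} [Monoid S] {B Q T : Type u} [RightAct S B] [RightAct S Q] [RightAct S T]

theorem ActInjective.inCInjective (hT : ActInjective S T) : InCInjective S T :=
  fun B _ _ => hT B

theorem InCInjective.extend_on_orbit (hT : InCInjective S T) (b : B) {C : Set B}
    (hCb : C ⊆ actOrbit S b) (hC : IsSubact S C) {g : B → T} (hg : IsActHomOn S g C) :
    ∃ h : B → T, IsActHomOn S h (actOrbit S b) ∧ Set.EqOn h g C := by
  obtain ⟨c, hc⟩ := hC.1
  obtain ⟨h, hh, hhg⟩ := hT (actOrbit S b) (cyclicAct_actOrbit b).indecomposable {x | x.1 ∈ C}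
    ⟨⟨⟨c, hCb hc⟩, hc⟩, fun x hx s => hC.2 x.1 hx s⟩ (fun x => g x.1) fun x hx s => hg x.1 hx s
  refine ⟨fun x => if hx : x ∈ actOrbit S b then h ⟨x, hx⟩ else g x, fun x hx s => ?_,
    fun x hx => ?_⟩
  · simp only [dif_pos hx, dif_pos (isActClosed_actOrbit b x hx s)]
    exact hh ⟨x, hx⟩ s
  · simp only [dif_pos (hCb hx)]
    exact hhg hx

theorem InCInjective.actInjective_of_isZeroElem (hT : InCInjective S T) (θ : T)
    (hθ : IsZeroElem S θ) : ActInjective S T :=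
  actInjective_of_extend_on_orbit θ hθ fun _ _ b _ hCb hC _ => hT.extend_on_orbit b hCb hC

theorem IsActHomOn.getD {f : B → Option Q} {C : Set B} (hf : IsActHomOn S f C)
    (hne : ∀ x ∈ C, f x ≠ none) (q₀ : Q) : IsActHomOn S (fun x => (f x).getD q₀) C := by
  intro x hx s
  obtain ⟨q, hq⟩ := Option.ne_none_iff_exists'.1 (hne x hx)
  simp only [hf x hx s, hq]
  rfl

theorem Indecomposable.forall_ne_none (hB : Indecomposable S B) {G : B → Option Q}
    (hG : IsActHom S G) {x₀ : B} (hx₀ : G x₀ ≠ none) (x : B) : G x ≠ none := by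
  intro hx
  refine hB ⟨{y | G y = none}, {y | G y = none}ᶜ, ⟨⟨x, hx⟩, fun a ha s => ?_⟩,
    ⟨⟨x₀, hx₀⟩, fun a ha s => ?_⟩, Set.union_compl_self _, Set.inter_compl_self _⟩
  · show G (a ⊛ s) = none
    rw [hG a s, show G a = none from ha]
    rfl
  · obtain ⟨q, hq⟩ := Option.ne_none_iff_exists'.1 ha
    show G (a ⊛ s) ≠ none
    rw [hG a s, hq]
    exact Option.some_ne_none _

theorem InCInjective.of_option (hQ : InCInjective S (Option Q)) : InCInjective S Q := by
  intro B _ hB C hC f hf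
  obtain ⟨q₀⟩ := RightAct.nonempty (S := S) (A := Q)
  obtain ⟨G, hG, hGf⟩ := hQ B hB C hC (fun x => some (f x)) fun c hc s => congrArg some (hf c hc s)
  obtain ⟨c, hc⟩ := hC.1
  have hGne := hB.forall_ne_none hG (x₀ := c) (by simp [hGf hc])
  refine ⟨_, isActHomOn_univ.1 ((isActHomOn_univ.2 hG).getD (fun x _ => hGne x) q₀),
    fun x hx => ?_⟩
  simp [hGf hx]

end InCInjective

section Rees

variable {S : Type u} [Monoid S] {B Q : Type u} [RightAct S B] [RightAct S Q]

/-- The projection onto the Rees quotient `B / N`, realized on `Option {x // x ∉ N}` with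
`none` the class of `N`. -/
noncomputable def reesProj (N : Set B) (x : B) : Option {x // x ∉ N} :=
  if h : x ∈ N then none else some ⟨x, h⟩

theorem reesProj_bind {N : Set B} (hN : IsActClosed S N) (x : B) (s : S) :
    (reesProj N x).bind (fun p => reesProj N (p.1 ⊛ s)) = reesProj N (x ⊛ s) := by
  by_cases hx : x ∈ N
  · simp [reesProj, hx, hN x hx s]
  · simp [reesProj, hx]

noncomputable abbrev reesQuotientAct {N : Set B} (hN : IsActClosed S N) : RightAct S (Option {x // x ∉ N}) where
  act o s := o.bind fun p => reesProj N (p.1 ⊛ s)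
  act_one o := by
    cases o with
    | none => rfl
    | some p => simp [RightAct.act_one, reesProj, p.2]
  act_mul o s t := by
    cases o with
    | none => rfl
    | some p => simp only [Option.bind_some, reesProj_bind hN, RightAct.act_mul]
  nonempty := ⟨none⟩

theorem InCInjective.exists_isZeroElem (hQ : InCInjective S Q) (hB : Indecomposable S B)
    {C : Set B} (hC : IsActClosed S C) {f : B → Option Q} (hf : IsActHomOn S f C) {x₁ x₂ : B}
    (hx₁ : x₁ ∈ C) (h₁ : f x₁ ≠ none) (hx₂ : x₂ ∈ C) (h₂ : f x₂ = none) :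
    ∃ θ : Q, IsZeroElem S θ := by
  obtain ⟨q₀⟩ := RightAct.nonempty (S := S) (A := Q)
  set N := {x | x ∈ C ∧ f x = none}
  have hN : IsActClosed S N := fun x ⟨hx, hfx⟩ s => ⟨hC x hx s, by rw [hf x hx s, hfx]; rfl⟩
  let := reesQuotientAct hN
  have hπ : IsActHom S (reesProj N) := fun x s => (reesProj_bind hN x s).symm
  have hind : Indecomposable S (Option {x // x ∉ N}) := by
    refine hB.of_surjective hπ ?_
    rintro (_ | p)
    exacts [⟨x₂, dif_pos ⟨hx₂, h₂⟩⟩, ⟨p.1, dif_neg p.2⟩]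
  have hCN : IsActClosed S (C \ N) := fun x hx s => by
    refine ⟨hC x hx.1 s, fun hxs => ?_⟩
    obtain ⟨q, hq⟩ := Option.ne_none_iff_exists'.1 fun h => hx.2 ⟨hx.1, h⟩
    have hfxs := hxs.2
    rw [hf x hx.1 s, hq] at hfxs
    exact Option.some_ne_none _ hfxs
  let F : Option {x // x ∉ N} → Option Q := fun o => o.bind fun p => f p.1
  have hF : ∀ x ∉ N, F (reesProj N x) = f x := fun x hx => by simp [F, reesProj, hx]
  have hFhom : IsActHomOn S F (reesProj N '' (C \ N)) := by
    rintro _ ⟨x, hx, rfl⟩ s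
    rw [← hπ, hF _ (hCN x hx s).2, hF _ hx.2, hf x hx.1 s]
  have hFne : ∀ o ∈ reesProj N '' (C \ N), F o ≠ none := by
    rintro _ ⟨x, hx, rfl⟩
    rw [hF _ hx.2]
    exact fun h => hx.2 ⟨hx.1, h⟩
  obtain ⟨h, hh, -⟩ := hQ _ hind (reesProj N '' (C \ N)) ⟨⟨_, x₁, ⟨hx₁, fun h => h₁ h.2⟩, rfl⟩, hCN.image hπ⟩ _
    (hFhom.getD hFne q₀)
  exact ⟨h none, fun s => (hh none s).symm⟩

theorem InCInjective.option (hQ : InCInjective S Q) (hz : ¬ ∃ θ : Q, IsZeroElem S θ) :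
    InCInjective S (Option Q) := by
  intro B _ hB C hC f hf
  by_cases hnone : ∀ x ∈ C, f x = none
  · exact ⟨fun _ => none, fun _ _ => rfl, fun x hx => (hnone x hx).symm⟩
  obtain ⟨x₁, hx₁, h₁⟩ : ∃ x ∈ C, f x ≠ none := by simpa using hnone
  have hne : ∀ x ∈ C, f x ≠ none := fun x₂ hx₂ h₂ =>
    hz (hQ.exists_isZeroElem hB hC.2 hf hx₁ h₁ hx₂ h₂)
  obtain ⟨q₀⟩ := RightAct.nonempty (S := S) (A := Q)
  obtain ⟨g, hg, hgf⟩ := hQ B hB C hC _ (hf.getD hne q₀)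
  refine ⟨fun x => some (g x), fun x s => congrArg some (hg x s), fun x hx => ?_⟩
  exact (congrArg some (hgf hx)).trans (Option.getD_of_ne_none (hne x hx) q₀)

end Rees

/-- `Q` is InC-injective iff `Q^θ` is injective, where `Q^θ = Q` if `Q`
has a zero and otherwise `Q^θ` is `Q` with one externally adjoined zero
(here `Option Q`, with `none` the adjoined zero). -/
theorem inCInjective_iff_adjoinZero_injective (S : Type u) [Monoid S]
    (Q : Type u) [RightAct S Q] :
    InCInjective S Q ↔
      (if ∃ θ : Q, IsZeroElem S θ then ActInjective S Q
       else ActInjective S (Option Q)) := by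
  split_ifs with hz
  · obtain ⟨θ, hθ⟩ := hz
    exact ⟨fun hQ => hQ.actInjective_of_isZeroElem θ hθ, ActInjective.inCInjective⟩
  · exact ⟨fun hQ => (hQ.option hz).actInjective_of_isZeroElem none fun _ => rfl,
      fun hQ => hQ.inCInjective.of_option⟩
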